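/- arXiv:1510.01455 — 6 statements merged into one kernel-verified Lean document; each statement's English description precedes it below -/
import Mathlib

section
/- Let β ∈ (0,1) and for z ∈ (0,1) let β^{i(z)} denote the largest power β^i (i a nonnegative integer) that is strictly less than z. Fix k ≥ 1 and a finite set S of n ≥ k+1 distinct values in (0,1), and for x ∈ (0,1) \ S let T(x) = β^{i(m(x))} where m(x) is the (k+1)-st smallest element of S ∪ {x}. Then T satisfies 1-Goodness with threshold F = β^{i(a)}, where a is the k-th smallest element of S. -/
/-!
Write `a` for the `k`-th smallest element of `S` and `m x` for the `(k+1)`-st smallest element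
of `S ∪ {x}`. An element's position in the sorted list of a finset is the number of elements
below it, so inserting `x < a` shifts `a` up by one place and `m x = a`, while for `x > a` at
least `k` elements lie below `x` and `m x ≤ x`. Since `β ^ iz z < z`, the hypothesis `x < F`
forces `x < a`, giving `T x = F`; and if `F ≤ x`, either `x < a` and `T x = F ≤ x`, or `x > a`
and `T x < m x ≤ x`.
-/

namespace Finset

variable {α : Type*} [LinearOrder α] {s : Finset α}

theorem card_filter_lt_sort_getElem (s : Finset α) {i : ℕ} (hi : i < s.sort.length) :
    #{z ∈ s | z < s.sort[i]} = i := by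
  set f := s.orderEmbOfFin rfl
  set i' : Fin #s := ⟨i, by simpa using hi⟩
  have hmap : {z ∈ s | z < f i'} = (Iio i').map f.toEmbedding := by
    ext z
    simp only [mem_filter, mem_map, mem_Iio, RelEmbedding.coe_toEmbedding]
    constructor
    · rintro ⟨hz, hlt⟩
      obtain ⟨j, rfl⟩ : z ∈ Set.range f := by simpa [f] using hz
      exact ⟨j, f.lt_iff_lt.mp hlt, rfl⟩
    · rintro ⟨j, hj, rfl⟩
      exact ⟨orderEmbOfFin_mem _ _ _, f.lt_iff_lt.mpr hj⟩
  change #{z ∈ s | z < f i'} = i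
  rw [hmap, card_map, Fin.card_Iio]

theorem exists_sort_getElem_card_filter_lt {y : α} (hy : y ∈ s) :
    ∃ h : #{z ∈ s | z < y} < s.sort.length, s.sort[#{z ∈ s | z < y}] = y := by
  obtain ⟨j, hj, rfl⟩ := List.getElem_of_mem ((mem_sort (· ≤ ·)).mpr hy)
  rw [card_filter_lt_sort_getElem s hj]
  exact ⟨hj, rfl⟩

theorem sort_getElem_eq_of_card_filter_lt {y : α} (hy : y ∈ s) {i : ℕ} (hi : i < s.sort.length)
    (h : #{z ∈ s | z < y} = i) : s.sort[i] = y := by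
  obtain ⟨_, hj⟩ := exists_sort_getElem_card_filter_lt hy
  simpa only [h] using hj

theorem sort_getElem_le_of_le_card_filter_lt {y : α} (hy : y ∈ s) {i : ℕ}
    (hi : i < s.sort.length) (h : i ≤ #{z ∈ s | z < y}) : s.sort[i] ≤ y := by
  obtain ⟨hj, hjy⟩ := exists_sort_getElem_card_filter_lt hy
  exact hjy ▸ (s.sortedLT_sort.getElem_le_getElem_iff).mpr h

theorem getD_sort_mem {i : ℕ} (hi : i < #s) (d : α) : s.sort.getD i d ∈ s := by
  rw [List.getD_eq_getElem _ _ (by simpa using hi)]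
  exact (mem_sort (· ≤ ·)).mp (List.getElem_mem _)

theorem getD_sort_insert_succ_of_lt {x : α} (hx : x ∉ s) {i : ℕ} (hi : i < #s) (d : α)
    (hxa : x < s.sort.getD i d) : (insert x s).sort.getD (i + 1) d = s.sort.getD i d := by
  have hi' : i < s.sort.length := by simpa using hi
  rw [List.getD_eq_getElem _ _ hi'] at hxa ⊢
  rw [List.getD_eq_getElem _ _ (by simpa [card_insert_of_notMem hx] using hi)]
  have ha : s.sort[i] ∈ s := (mem_sort (· ≤ ·)).mp (List.getElem_mem _)
  refine sort_getElem_eq_of_card_filter_lt (mem_insert_of_mem ha) _ ?_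
  rw [filter_insert, if_pos hxa, card_insert_of_notMem (fun h => hx (mem_filter.mp h).1),
    card_filter_lt_sort_getElem]

theorem getD_sort_insert_succ_le_of_gt {x : α} (hx : x ∉ s) {i : ℕ} (hi : i < #s) (d : α)
    (hax : s.sort.getD i d < x) : (insert x s).sort.getD (i + 1) d ≤ x := by
  have hi' : i < s.sort.length := by simpa using hi
  rw [List.getD_eq_getElem _ _ hi'] at hax
  rw [List.getD_eq_getElem _ _ (by simpa [card_insert_of_notMem hx] using hi)]
  refine sort_getElem_le_of_le_card_filter_lt (mem_insert_self x s) _ ?_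
  have hsub : {z ∈ s | z < s.sort[i]} ⊂ {z ∈ s | z < x} := by
    refine (ssubset_iff_of_subset fun z hz => ?_).mpr ?_
    · simp only [mem_filter] at hz ⊢
      exact ⟨hz.1, hz.2.trans hax⟩
    · have ha : s.sort[i] ∈ s := (mem_sort (· ≤ ·)).mp (List.getElem_mem _)
      exact ⟨s.sort[i], mem_filter.mpr ⟨ha, hax⟩, by simp⟩
  rw [filter_insert, if_neg (lt_irrefl x)]
  simpa [card_filter_lt_sort_getElem] using card_lt_card hsub

end Finset

theorem stmt5_general (β : ℝ)
    (iz : ℝ → ℕ)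
    (hiz : ∀ z ∈ Set.Ioo (0:ℝ) 1, β ^ iz z < z ∧ ∀ i : ℕ, β ^ i < z → iz z ≤ i)
    (k : ℕ) (hk : 1 ≤ k) (S : Finset ℝ)
    (hS : ↑S ⊆ Set.Ioo (0:ℝ) 1) (hcard : k + 1 ≤ S.card) :
    ∀ x ∈ Set.Ioo (0:ℝ) 1, x ∉ S →
      (x < β ^ iz ((S.sort (· ≤ ·)).getD (k - 1) 0) →
        β ^ iz (((insert x S).sort (· ≤ ·)).getD k 0)
          = β ^ iz ((S.sort (· ≤ ·)).getD (k - 1) 0)) ∧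
      (β ^ iz ((S.sort (· ≤ ·)).getD (k - 1) 0) ≤ x →
        β ^ iz (((insert x S).sort (· ≤ ·)).getD k 0) ≤ x) := by
  intro x hx hxS
  obtain ⟨i, rfl⟩ := Nat.exists_eq_add_of_le' hk
  rw [Nat.add_sub_cancel]
  have hi : i < S.card := by omega
  have haS := Finset.getD_sort_mem hi 0
  have hT_lt : ∀ z ∈ Set.Ioo (0:ℝ) 1, β ^ iz z < z := fun z hz => (hiz z hz).1
  refine ⟨fun hxF => ?_, fun hFx => ?_⟩
  · rw [Finset.getD_sort_insert_succ_of_lt hxS hi 0 (hxF.trans (hT_lt _ (hS haS)))]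
  · rcases (ne_of_mem_of_not_mem haS hxS).lt_or_gt with hax | hxa
    · have hinsert : ↑(insert x S) ⊆ Set.Ioo (0:ℝ) 1 := by
        rw [Finset.coe_insert]
        exact Set.insert_subset hx hS
      have hmI := hinsert <| Finset.getD_sort_mem (i := i + 1)
        (by rw [Finset.card_insert_of_notMem hxS]; omega) 0
      exact (hT_lt _ hmI).le.trans (Finset.getD_sort_insert_succ_le_of_gt hxS hi 0 hax)
    · rwa [Finset.getD_sort_insert_succ_of_lt hxS hi 0 hxa]

/-- The Adaptive-Sampling threshold-choosing function satisfies 1-Goodness: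
with `β ∈ (0,1)` and `iz z` the least nonnegative integer `i` with `β^i < z`,
the map `x ↦ β ^ iz (m x)` (where `m x` is the `(k+1)`-st smallest element of
`S ∪ {x}`) is 1-Good with threshold `β ^ iz a`, where `a` is the `k`-th
smallest element of `S`. -/
theorem stmt5 (β : ℝ) (hβ : β ∈ Set.Ioo (0:ℝ) 1)
    (iz : ℝ → ℕ)
    (hiz : ∀ z ∈ Set.Ioo (0:ℝ) 1, β ^ iz z < z ∧ ∀ i : ℕ, β ^ i < z → iz z ≤ i)
    (k : ℕ) (hk : 1 ≤ k) (S : Finset ℝ)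
    (hS : ↑S ⊆ Set.Ioo (0:ℝ) 1) (hcard : k + 1 ≤ S.card) :
    ∀ x ∈ Set.Ioo (0:ℝ) 1, x ∉ S →
      (x < β ^ iz ((S.sort (· ≤ ·)).getD (k - 1) 0) →
        β ^ iz (((insert x S).sort (· ≤ ·)).getD k 0)
          = β ^ iz ((S.sort (· ≤ ·)).getD (k - 1) 0)) ∧
      (β ^ iz ((S.sort (· ≤ ·)).getD (k - 1) 0) ≤ x →
        β ^ iz (((insert x S).sort (· ≤ ·)).getD k 0) ≤ x) :=
  stmt5_general β iz hiz k hk S hS hcard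
end

section
/- 1-Goodness implies 2-Goodness: Let T : [0,1) × [0,1) → (0,1] be a bivariate function such that for every fixed y' the function x ↦ T(x, y') satisfies 1-Goodness (with some threshold G(y') depending on y'), and for every fixed x' the function y ↦ T(x', y) satisfies 1-Goodness (with some threshold H(x')). Then there exists F ∈ (0,1] such that max(x,y) < F implies T(x,y) = F, and max(x,y) ≥ F implies T(x,y) ≤ max(x,y). -/
/-- 1-Goodness implies 2-Goodness: if every horizontal and vertical section of
a bivariate `T : [0,1)² → (0,1]` satisfies 1-Goodness, then `T` satisfies
2-Goodness. -/
theorem stmt6 (T : ℝ → ℝ → ℝ)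
    (hrange : ∀ x ∈ Set.Ico (0:ℝ) 1, ∀ y ∈ Set.Ico (0:ℝ) 1, T x y ∈ Set.Ioc (0:ℝ) 1)
    (hrow : ∀ y ∈ Set.Ico (0:ℝ) 1, ∃ G ∈ Set.Ioc (0:ℝ) 1,
      ∀ x ∈ Set.Ico (0:ℝ) 1, (x < G → T x y = G) ∧ (G ≤ x → T x y ≤ x))
    (hcol : ∀ x ∈ Set.Ico (0:ℝ) 1, ∃ H ∈ Set.Ioc (0:ℝ) 1,
      ∀ y ∈ Set.Ico (0:ℝ) 1, (y < H → T x y = H) ∧ (H ≤ y → T x y ≤ y)) :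
    ∃ F ∈ Set.Ioc (0:ℝ) 1,
      ∀ x ∈ Set.Ico (0:ℝ) 1, ∀ y ∈ Set.Ico (0:ℝ) 1,
        (max x y < F → T x y = F) ∧ (F ≤ max x y → T x y ≤ max x y) := by
  have h0 : (0:ℝ) ∈ Set.Ico (0:ℝ) 1 := ⟨le_refl 0, one_pos⟩
  obtain ⟨F, hF, hrow0⟩ := hrow 0 h0
  refine ⟨F, hF, ?_⟩
  -- column-0 threshold equals F
  obtain ⟨H0, hH0, hcol0⟩ := hcol 0 h0
  have hH0F : H0 = F := by
    have h1 := (hcol0 0 h0).1 hH0.1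
    have h2 := (hrow0 0 h0).1 hF.1
    rw [h2] at h1; exact h1.symm
  -- column x threshold facts
  intro x hx y hy
  obtain ⟨Hx, hHx, hcolx⟩ := hcol x hx
  have hHxT : T x 0 = Hx := (hcolx 0 h0).1 hHx.1
  obtain ⟨Gy, hGy, hrowy⟩ := hrow y hy
  have hGyT : T 0 y = Gy := (hrowy 0 h0).1 hGy.1
  constructor
  · intro hmax
    have hxF : x < F := lt_of_le_of_lt (le_max_left x y) hmax
    have hyF : y < F := lt_of_le_of_lt (le_max_right x y) hmax
    have : Hx = F := by
      have := (hrow0 x hx).1 hxF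
      rw [this] at hHxT; exact hHxT.symm
    rw [this] at hcolx
    exact (hcolx y hy).1 hyF
  · intro hmax
    rcases le_or_gt F x with hFx | hFx
    · -- H x ≤ x
      have hHxx : Hx ≤ x := by
        have := (hrow0 x hx).2 hFx
        rw [hHxT] at this; exact this
      rcases lt_or_ge y Hx with h | h
      · have := (hcolx y hy).1 h
        rw [this]
        exact le_trans hHxx (le_max_left x y)
      · exact le_trans ((hcolx y hy).2 h) (le_max_right x y)
    · have hFy : F ≤ y := by
        rcases max_cases x y with ⟨h, _⟩ | ⟨h, _⟩
        · rw [h] at hmax; linarith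
        · rw [h] at hmax; exact hmax
      have hGyy : Gy ≤ y := by
        have := (hcol0 y hy).2 (hH0F ▸ hFy)
        rw [hGyT] at this; exact this
      rcases lt_or_ge x Gy with h | h
      · have := (hrowy x hx).1 h
        rw [this]
        exact le_trans hGyy (le_max_right x y)
      · exact le_trans ((hrowy x hx).2 h) (le_max_left x y)
end

section
/- If a bivariate function T : [0,1)² → (0,1] satisfies 2-Goodness with threshold F, and X, Y are independent uniform random variables on (0,1), then E[V₁·V₂] = 1, where V₁ = (1/T(X,Y))·[X < T(X,Y)] and V₂ = (1/T(X,Y))·[Y < T(X,Y)]. -/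
open MeasureTheory

/-!
Under 2-goodness, `V₁ V₂ (x, y)` is `1 / F²` when `max x y < F` (there `T = F`) and `0` otherwise
(there `T ≤ max x y`, so one indicator vanishes). Hence `E[V₁ V₂] = P(X < F) P(Y < F) / F² = 1`.
-/

lemma setIntegral_Ioo_zero_one_ite_lt {F : ℝ} (c : ℝ) (hF0 : 0 ≤ F) (hF1 : F ≤ 1) :
    ∫ y in Set.Ioo (0:ℝ) 1, (if y < F then c else 0) = F * c := by
  have hind : (fun y : ℝ => if y < F then c else 0) = (Set.Iio F).indicator fun _ => c := by
    ext y
    simp only [Set.indicator_apply, Set.mem_Iio]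
  rw [hind, setIntegral_indicator measurableSet_Iio, Set.Ioo_inter_Iio,
    min_eq_right hF1, setIntegral_const, smul_eq_mul,
    Measure.real, Real.volume_Ioo, sub_zero, ENNReal.toReal_ofReal hF0]

lemma ite_mul_ite_eq_of_goodness {x y t F : ℝ}
    (hbelow : max x y < F → t = F) (habove : F ≤ max x y → t ≤ max x y) :
    (if x < t then 1 / t else 0) * (if y < t then 1 / t else 0)
      = if max x y < F then 1 / F ^ 2 else 0 := by
  by_cases hm : max x y < F
  · obtain ⟨hxF, hyF⟩ := max_lt_iff.mp hm
    rw [hbelow hm, if_pos hxF, if_pos hyF, if_pos hm]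
    ring
  · have ht := habove (not_lt.mp hm)
    rw [if_neg hm]
    rcases le_total y x with hyx | hxy
    · rw [if_neg (not_lt.mpr (ht.trans (max_eq_left hyx).le)), zero_mul]
    · rw [if_neg (not_lt.mpr (ht.trans (max_eq_right hxy).le)), mul_zero]

/-- If `T` satisfies 2-Goodness with threshold `F` and `X, Y` are independent
uniforms on `(0,1)`, then `E[V₁·V₂] = 1` where
`V₁ = (1/T(X,Y))·[X < T(X,Y)]` and `V₂ = (1/T(X,Y))·[Y < T(X,Y)]`. -/
theorem stmt7 (T : ℝ → ℝ → ℝ) (F : ℝ) (hF : F ∈ Set.Ioc (0:ℝ) 1)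
    (hgood : ∀ x ∈ Set.Ico (0:ℝ) 1, ∀ y ∈ Set.Ico (0:ℝ) 1,
      (max x y < F → T x y = F) ∧ (F ≤ max x y → T x y ≤ max x y)) :
    ∫ x in Set.Ioo (0:ℝ) 1, ∫ y in Set.Ioo (0:ℝ) 1,
      (if x < T x y then 1 / T x y else 0) *
      (if y < T x y then 1 / T x y else 0) = 1 := by
  obtain ⟨hF0, hF1⟩ := hF
  have inner : ∀ x ∈ Set.Ioo (0:ℝ) 1,
      (∫ y in Set.Ioo (0:ℝ) 1,
        (if x < T x y then 1 / T x y else 0) * (if y < T x y then 1 / T x y else 0))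
      = if x < F then 1 / F else 0 := by
    intro x hx
    rw [setIntegral_congr_fun measurableSet_Ioo fun y hy =>
      (hgood x ⟨hx.1.le, hx.2⟩ y ⟨hy.1.le, hy.2⟩).elim ite_mul_ite_eq_of_goodness]
    by_cases hxF : x < F
    · simp only [max_lt_iff, hxF, true_and, if_true]
      rw [setIntegral_Ioo_zero_one_ite_lt _ hF0.le hF1]
      field_simp
    · simp [hxF]
  rw [setIntegral_congr_fun measurableSet_Ioo inner,
    setIntegral_Ioo_zero_one_ite_lt _ hF0.le hF1]
  field_simp
end

section
/- For the KMV estimator: if the (k+1)-st smallest of n_A i.i.d. Uniform(0,1) random variables is M, then E[k/M] = n_A and Var(k/M) = (n_A² − k·n_A)/(k−1) < n_A²/(k−1), for 2 ≤ k+1 ≤ n_A. -/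
/-!
`M` has the Beta density `n!/(k!(n-k-1)!) x^k (1-x)^(n-k-1)` on `(0,1)`. Dividing it by `x^r`
(for `r ≤ k`) leaves a Beta integrand with exponent `k - r`, and the Beta integrals
`∫₀¹ x^a (1-x)^b = a! b!/(a+b+1)!` give `E[M⁻ʳ] = n(n-1)⋯(n-r+1) / (k(k-1)⋯(k-r+1))`.
Thus `E[1/M] = n/k` and `E[1/M²] = n(n-1)/(k(k-1))`, from which the mean and variance of
`k/M` follow by algebra.
-/

open MeasureTheory Set Nat

theorem integral_pow_mul_one_sub_pow (a b : ℕ) :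
    ∫ x in (0:ℝ)..1, x ^ a * (1 - x) ^ b = (a ! * b ! : ℝ) / (a + b + 1)! := by
  induction b generalizing a with
  | zero => simp [Nat.factorial_succ, field]
  | succ b ih =>
    -- `(1 - x)^(b+1) = (1 - x)^b - x (1 - x)^b` reduces the integral to two with smaller `b`.
    have hsplit : ∀ x : ℝ,
        x ^ a * (1 - x) ^ (b + 1) = x ^ a * (1 - x) ^ b - x ^ (a + 1) * (1 - x) ^ b :=
      fun x => by ring
    simp_rw [hsplit]
    rw [intervalIntegral.integral_sub ((by fun_prop : Continuous _).intervalIntegrable _ _)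
      ((by fun_prop : Continuous _).intervalIntegrable _ _), ih, ih,
      show a + 1 + b + 1 = a + (b + 1) + 1 by ring, show a + b + 1 = a + (b + 1) by ring]
    simp only [Nat.factorial_succ]
    push_cast
    field_simp
    ring

theorem setIntegral_Ioo_pow_mul_one_sub_pow (a b : ℕ) :
    ∫ x in Ioo (0:ℝ) 1, x ^ a * (1 - x) ^ b = (a ! * b ! : ℝ) / (a + b + 1)! := by
  rw [← integral_Ioc_eq_integral_Ioo, ← intervalIntegral.integral_of_le zero_le_one,
    integral_pow_mul_one_sub_pow]

theorem setIntegral_Ioo_inv_pow_mul_beta_density (a b r : ℕ) (hr : r ≤ a) :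
    ∫ x in Ioo (0:ℝ) 1, x⁻¹ ^ r * ((a + b + 1)! / (a ! * b !) * x ^ a * (1 - x) ^ b)
      = ((a + b + 1).descFactorial r : ℝ) / a.descFactorial r := by
  obtain ⟨c, rfl⟩ := Nat.exists_eq_add_of_le' hr
  have hcancel : EqOn
      (fun x : ℝ => x⁻¹ ^ r * ((c + r + b + 1)! / ((c + r)! * b !) * x ^ (c + r) * (1 - x) ^ b))
      (fun x => (c + r + b + 1)! / ((c + r)! * b !) * (x ^ c * (1 - x) ^ b)) (Ioo 0 1) := by
    intro x hx
    have : x ≠ 0 := hx.1.ne'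
    simp only [pow_add, inv_pow]
    field_simp
  rw [setIntegral_congr_fun measurableSet_Ioo hcancel, integral_const_mul,
    setIntegral_Ioo_pow_mul_one_sub_pow]
  have hn := Nat.factorial_mul_descFactorial (show r ≤ c + r + b + 1 by omega)
  have ha := Nat.factorial_mul_descFactorial (show r ≤ c + r by omega)
  rw [show c + r + b + 1 - r = c + b + 1 by omega] at hn
  rw [Nat.add_sub_cancel] at ha
  rw [← hn, ← ha]
  push_cast
  have : ((c + r).descFactorial r : ℝ) ≠ 0 := by
    exact_mod_cast (Nat.descFactorial_pos.mpr le_add_self).ne'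
  field_simp

/-- KMV estimator: if `M` is the `(k+1)`-st smallest of `n` i.i.d. uniforms on
`(0,1)` — so `M ~ Beta(k+1, n−k)` with density
`C·x^k·(1−x)^(n−k−1)` where `C = n!/(k!·(n−k−1)!)` — then `E[k/M] = n` and
`Var(k/M) = (n² − k·n)/(k−1) < n²/(k−1)`, for `2 ≤ k` and `k+1 ≤ n`. -/
theorem stmt12 (k n : ℕ) (hk : 2 ≤ k) (hn : k + 1 ≤ n) :
    (∫ x in Set.Ioo (0:ℝ) 1,
        ((k : ℝ) / x) *
          ((n.factorial : ℝ) / (k.factorial * (n - k - 1).factorial)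
            * x ^ k * (1 - x) ^ (n - k - 1)) = n) ∧
    ((∫ x in Set.Ioo (0:ℝ) 1,
        ((k : ℝ) / x) ^ 2 *
          ((n.factorial : ℝ) / (k.factorial * (n - k - 1).factorial)
            * x ^ k * (1 - x) ^ (n - k - 1))) - (n : ℝ) ^ 2
      = ((n : ℝ) ^ 2 - k * n) / (k - 1)) ∧
    ((n : ℝ) ^ 2 - k * n) / (k - 1) < (n : ℝ) ^ 2 / (k - 1) := by
  have hsum : k + (n - k - 1) + 1 = n := by omega
  have hinv := setIntegral_Ioo_inv_pow_mul_beta_density k (n - k - 1) 1 (by omega)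
  have hinv_sq := setIntegral_Ioo_inv_pow_mul_beta_density k (n - k - 1) 2 (by omega)
  simp only [hsum, pow_one, Nat.descFactorial_one] at hinv
  rw [hsum, Nat.cast_descFactorial_two, Nat.cast_descFactorial_two] at hinv_sq
  simp_rw [div_eq_mul_inv (k : ℝ), mul_pow, mul_assoc (k : ℝ), mul_assoc ((k : ℝ) ^ 2),
    integral_const_mul, hinv, hinv_sq]
  have hk1 : (0 : ℝ) < k - 1 := by
    rw [sub_pos]; exact_mod_cast hk
  have hn0 : (0 : ℝ) < n := by exact_mod_cast (show 0 < n by omega)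
  refine ⟨by field_simp, by field_simp; ring, ?_⟩
  gcongr
  nlinarith
end

section
/- With g defined by the recurrence g(0,k,u) = 1, g(q,k,0) = 1, and g(q,k,u+1) = g(q,k,u) + ((1−α^q)/α^q)·g(q−1,k,u) where α = k/(k+1), we have for all u ≥ 0: g(2,k,u) = (k³ + 2k²u + ku² + u(u−1)/2)/k³. -/
/-! Since `(1 - α^q)/α^q = ((k+1)^q - k^q)/k^q`, the increments of `g 1` are the constant `1/k`, so
`g 1 k u = 1 + u/k`; the increments of `g 2` are then `(2k+1)/k² · (1 + u/k)`, and the claimed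
closed form is the polynomial in `u` with value `1` at `0` and these increments. -/

theorem eq_of_forall_succ_eq_add {M : Type*} [Add M] {f F d : ℕ → M} (h0 : f 0 = F 0)
    (hf : ∀ u, f (u + 1) = f u + d u) (hF : ∀ u, F (u + 1) = F u + d u) : ∀ u, f u = F u
  | 0 => h0
  | u + 1 => by rw [hf, hF, eq_of_forall_succ_eq_add h0 hf hF u]

theorem one_sub_div_pow_div_div_pow {K : Type*} [Field K] (a b : K) (q : ℕ) (hb : b ≠ 0) :
    (1 - (a / b) ^ q) / (a / b) ^ q = (b ^ q - a ^ q) / a ^ q := by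
  rw [div_pow, one_sub_div (pow_ne_zero q hb), div_div_div_cancel_right₀ (pow_ne_zero q hb)]

/-- With `α = k/(k+1)` and `g` satisfying the recurrence
`g q k (u+1) = g q k u + ((1−α^q)/α^q)·g (q−1) k u` with base cases
`g 0 k u = 1` and `g q k 0 = 1`, we have
`g 2 k u = (k³ + 2k²u + ku² + u(u−1)/2)/k³` for all `u`. -/
theorem stmt14 (k : ℕ) (hk : 1 ≤ k) (g : ℕ → ℕ → ℕ → ℝ)
    (α : ℝ) (hα : α = (k : ℝ) / (k + 1))
    (hg0 : ∀ u, g 0 k u = 1)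
    (hgq0 : ∀ q, g q k 0 = 1)
    (hrec : ∀ q u, 1 ≤ q →
      g q k (u + 1) = g q k u + ((1 - α ^ q) / α ^ q) * g (q - 1) k u) :
    ∀ u : ℕ, g 2 k u =
      ((k : ℝ) ^ 3 + 2 * k ^ 2 * u + k * u ^ 2 + u * (u - 1) / 2) / k ^ 3 := by
  have hk0 : (k : ℝ) ≠ 0 := Nat.cast_ne_zero.mpr (by omega)
  have hcoeff (q : ℕ) : (1 - α ^ q) / α ^ q = ((k + 1) ^ q - k ^ q) / k ^ q :=
    hα ▸ one_sub_div_pow_div_div_pow _ _ q (by positivity)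
  have hg1 : ∀ u : ℕ, g 1 k u = 1 + u / k :=
    eq_of_forall_succ_eq_add (d := fun _ => ((k + 1) ^ 1 - k ^ 1) / k ^ 1 * 1) (by simp [hgq0])
      (fun u => by rw [hrec 1 u le_rfl, hg0, hcoeff])
      (fun u => by push_cast; field_simp; ring)
  refine eq_of_forall_succ_eq_add (d := fun u => ((k + 1) ^ 2 - k ^ 2) / k ^ 2 * (1 + u / k))
    (by simp [hgq0, hk0]) (fun u => ?_) (fun u => ?_)
  · rw [hrec 2 u (by norm_num), hcoeff, ← hg1]
  · push_cast; field_simp; ring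
end

section
/- Let α = k/(k+1) and fix an integer i ≥ 0. Then k·α^i(1−α^i) + Σ_{j=1}^{i} α^j(1−α^j) = (α − α^{2i+1})/(1 − α²), and this quantity is strictly less than k/2 + 1/4. -/
open Finset

/-! Using `K (1 - α) = α`, passing from `i` to `i + 1` increases the left-hand side by exactly
`α^{2i+1} = (α^{2i+1} - α^{2i+3}) / (1 - α^2)`, the increment of the right-hand side. The bound
drops the subtracted power and, with `K = α / (1 - α)`, reduces after clearing denominators to
`0 < (1 - α)^2`. -/

theorem mul_pow_one_sub_pow_add_sum_mul_one_sub_sq {R : Type*} [CommRing R] {K α : R}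
    (h : K * (1 - α) = α) (n : ℕ) :
    (K * α ^ n * (1 - α ^ n) + ∑ j ∈ Icc 1 n, α ^ j * (1 - α ^ j)) * (1 - α ^ 2)
      = α - α ^ (2 * n + 1) := by
  induction n with
  | zero => simp
  | succ m ih =>
    rw [sum_Icc_succ_top (Nat.le_add_left 1 m)]
    linear_combination ih + ((1 - α ^ 2) * ((α ^ m) ^ 2 * (1 + α) - α ^ m)) * h

theorem mul_pow_one_sub_pow_add_sum_eq_div {F : Type*} [Field F] {K α : F}
    (h : K * (1 - α) = α) (hα : 1 - α ^ 2 ≠ 0) (n : ℕ) :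
    K * α ^ n * (1 - α ^ n) + ∑ j ∈ Icc 1 n, α ^ j * (1 - α ^ j)
      = (α - α ^ (2 * n + 1)) / (1 - α ^ 2) := by
  rw [eq_div_iff hα]
  exact mul_pow_one_sub_pow_add_sum_mul_one_sub_sq h n

theorem div_one_sub_sq_lt {α : ℝ} (hα₀ : -1 < α) (hα₁ : α < 1) :
    α / (1 - α ^ 2) < α / (1 - α) / 2 + 1 / 4 := by
  have h₁ : 0 < 1 - α := by linarith
  have h₂ : 0 < 1 + α := by linarith
  rw [show 1 - α ^ 2 = (1 - α) * (1 + α) by ring, ← sub_pos]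
  field_simp
  nlinarith [pow_pos h₁ 2]

theorem sub_pow_div_one_sub_sq_lt {α : ℝ} (hα₀ : 0 ≤ α) (hα₁ : α < 1) (n : ℕ) :
    (α - α ^ (2 * n + 1)) / (1 - α ^ 2) < α / (1 - α) / 2 + 1 / 4 := by
  have hpos : 0 < 1 - α ^ 2 := by nlinarith
  calc (α - α ^ (2 * n + 1)) / (1 - α ^ 2) ≤ α / (1 - α ^ 2) := by
        gcongr; exact sub_le_self _ (pow_nonneg hα₀ _)
    _ < α / (1 - α) / 2 + 1 / 4 := div_one_sub_sq_lt (by linarith) hα₁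

theorem stmt16_general (k : ℕ) (α : ℝ) (hα : α = (k : ℝ) / (k + 1))
    (i : ℕ) :
    ((k : ℝ) * α ^ i * (1 - α ^ i) + ∑ j ∈ Finset.Icc 1 i, α ^ j * (1 - α ^ j)
      = (α - α ^ (2 * i + 1)) / (1 - α ^ 2)) ∧
    (α - α ^ (2 * i + 1)) / (1 - α ^ 2) < (k : ℝ) / 2 + 1 / 4 := by
  have hk : (0 : ℝ) < k + 1 := by positivity
  have hα₀ : 0 ≤ α := hα ▸ by positivity
  have hα₁ : α < 1 := by rw [hα, div_lt_one hk]; linarith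
  have hrel : (k : ℝ) * (1 - α) = α := by rw [hα]; field_simp; ring
  have hk_eq : (k : ℝ) = α / (1 - α) := by rw [eq_div_iff (by linarith)]; exact hrel
  refine ⟨mul_pow_one_sub_pow_add_sum_eq_div hrel (by nlinarith) i, ?_⟩
  rw [hk_eq]
  exact sub_pow_div_one_sub_sq_lt hα₀ hα₁ i

/-- With `α = k/(k+1)` and `i ≥ 0`:
`k·α^i(1−α^i) + Σ_{j=1}^{i} α^j(1−α^j) = (α − α^{2i+1})/(1 − α²)`, and this
quantity is strictly less than `k/2 + 1/4`. -/
theorem stmt16 (k : ℕ) (hk : 1 ≤ k) (α : ℝ) (hα : α = (k : ℝ) / (k + 1))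
    (i : ℕ) :
    ((k : ℝ) * α ^ i * (1 - α ^ i) + ∑ j ∈ Finset.Icc 1 i, α ^ j * (1 - α ^ j)
      = (α - α ^ (2 * i + 1)) / (1 - α ^ 2)) ∧
    (α - α ^ (2 * i + 1)) / (1 - α ^ 2) < (k : ℝ) / 2 + 1 / 4 :=
  stmt16_general k α hα i
end
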